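/- Abstract version of the favorable-interval lemma: let J ⊆ [0, t] be a finite set of 'jump times' with |J| ≤ βt. Call an interval [s−√t, s) favorable if for all u ∈ [s−√t, s), |J ∩ [u, s)| ≤ 4β(s−u). Then one can find at least √t/4 − 1 pairwise disjoint favorable intervals contained in [0, t/2]. -/

import Mathlib

open scoped Classical

/-! Scan `[0, t/2]` from the right. If the window `[p - √t, p)` is favorable, keep it and move
`p` to `p - √t`; otherwise some `u` in the window has more than `4β (p - u)` jumps in `[u, p)`,
and we move `p` to `u`. Moves of the second kind skip at most `|J| / (4β) ≤ t/4` in total, so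
the kept windows cover at least `t/2 - √t - t/4` of length, i.e. there are at least
`√t/4 - 1` of them. -/

namespace FavorableInterval

variable (J : Finset ℝ) (κ r : ℝ)

def IsFavorable (s : ℝ) : Prop :=
  ∀ u ∈ Set.Ico (s - r) s, ((J.filter (fun x => u ≤ x ∧ x < s)).card : ℝ) ≤ κ * (s - u)

def IsFavorablePacking (a p : ℝ) (S : Finset ℝ) : Prop :=
  (∀ s ∈ S, a ≤ s - r ∧ s ≤ p ∧ IsFavorable J κ r s) ∧
    (S : Set ℝ).PairwiseDisjoint fun s => Set.Ico (s - r) s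

noncomputable def countBelow (p : ℝ) : ℕ := (J.filter (· < p)).card

variable {J κ r}

theorem countBelow_mono {u p : ℝ} (h : u ≤ p) : countBelow J u ≤ countBelow J p :=
  Finset.card_le_card fun x hx => by
    simp only [Finset.mem_filter] at hx ⊢
    exact ⟨hx.1, hx.2.trans_le h⟩

theorem countBelow_le_card (p : ℝ) : countBelow J p ≤ J.card :=
  Finset.card_filter_le _ _

theorem countBelow_eq_add {u p : ℝ} (h : u ≤ p) :
    countBelow J p = countBelow J u + (J.filter (fun x => u ≤ x ∧ x < p)).card := by
  rw [countBelow, countBelow, ← Finset.card_union_of_disjoint]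
  · congr 1
    ext x
    simp only [Finset.mem_filter, Finset.mem_union]
    constructor
    · rintro ⟨hx, hxp⟩
      exact (lt_or_ge x u).imp (fun hxu => ⟨hx, hxu⟩) fun hux => ⟨hx, hux, hxp⟩
    · rintro (⟨hx, hxu⟩ | ⟨hx, -, hxp⟩)
      exacts [⟨hx, hxu.trans_le h⟩, ⟨hx, hxp⟩]
  · exact Finset.disjoint_filter.2 fun _ _ hxu hux => hux.1.not_gt hxu

theorem exists_dense_of_not_isFavorable (hκ : 0 < κ) {p : ℝ} (h : ¬IsFavorable J κ r p) :
    ∃ u ∈ Set.Ico (p - r) p, countBelow J u < countBelow J p ∧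
      κ * (p - u) < (countBelow J p : ℝ) - countBelow J u := by
  simp only [IsFavorable, not_forall, not_le] at h
  obtain ⟨u, hu, hcount⟩ := h
  have hsplit := countBelow_eq_add (J := J) hu.2.le
  have hpos : (0 : ℝ) < κ * (p - u) := mul_pos hκ (sub_pos.2 hu.2)
  refine ⟨u, hu, ?_, ?_⟩
  · have : 0 < (J.filter (fun x => u ≤ x ∧ x < p)).card := by exact_mod_cast hpos.trans hcount
    omega
  · rw [hsplit, Nat.cast_add]
    linarith

namespace IsFavorablePacking

theorem empty (a p : ℝ) : IsFavorablePacking J κ r a p ∅ :=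
  ⟨by simp, by simp⟩

theorem mono_right {a p q : ℝ} {S : Finset ℝ} (hS : IsFavorablePacking J κ r a p S)
    (hpq : p ≤ q) : IsFavorablePacking J κ r a q S :=
  ⟨fun s hs => (hS.1 s hs).imp_right fun h => ⟨h.1.trans hpq, h.2⟩, hS.2⟩

theorem insert (hr : 0 ≤ r) {a p : ℝ} {S : Finset ℝ}
    (hS : IsFavorablePacking J κ r a (p - r) S) (hap : a ≤ p - r) (hp : IsFavorable J κ r p) :
    IsFavorablePacking J κ r a p (insert p S) := by
  refine ⟨fun s hs => ?_, ?_⟩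
  · rcases Finset.mem_insert.1 hs with rfl | hs
    · exact ⟨hap, le_rfl, hp⟩
    · obtain ⟨has, hsp, hfav⟩ := hS.1 s hs
      exact ⟨has, by linarith, hfav⟩
  · rw [Finset.coe_insert]
    refine hS.2.insert fun s hs _ => ?_
    rw [Set.Ico_disjoint_Ico]
    exact (min_le_right _ _).trans ((hS.1 s hs).2.1.trans (le_max_left _ _))

end IsFavorablePacking

theorem exists_isFavorablePacking_of_sub_lt (hκ : 0 < κ) {a p : ℝ} (h : p - a < r) :
    ∃ S, IsFavorablePacking J κ r a p S ∧ p - a - r - countBelow J p / κ ≤ r * S.card :=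
  ⟨∅, .empty a p, by
    have : (0 : ℝ) ≤ countBelow J p / κ := by positivity
    simp only [Finset.card_empty, Nat.cast_zero, mul_zero]
    linarith⟩

/-- The greedy scan, by induction on an upper bound for the potential
`countBelow J p + (p - a) / r`, which drops by at least one at every step. -/
theorem exists_isFavorablePacking_of_potential_le (hκ : 0 < κ) (hr : 0 < r) (a : ℝ) (n : ℕ) :
    ∀ p : ℝ, (countBelow J p : ℝ) + (p - a) / r ≤ n →
      ∃ S, IsFavorablePacking J κ r a p S ∧ p - a - r - countBelow J p / κ ≤ r * S.card := by
  induction n with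
  | zero =>
    intro p hp
    refine exists_isFavorablePacking_of_sub_lt hκ ?_
    have : (p - a) / r ≤ 0 := by push_cast at hp; linarith [(countBelow J p).cast_nonneg (α := ℝ)]
    linarith [(div_le_iff₀ hr).1 this]
  | succ n ih =>
    intro p hp
    push_cast at hp
    rcases lt_or_ge (p - a) r with hpr | hpr
    · exact exists_isFavorablePacking_of_sub_lt hκ hpr
    by_cases hfav : IsFavorable J κ r p
    · have hmono : (countBelow J (p - r) : ℝ) ≤ countBelow J p := by
        exact_mod_cast countBelow_mono (by linarith)
      have hstep : (p - r - a) / r = (p - a) / r - 1 := by field_simp; ring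
      obtain ⟨S, hS, hcard⟩ := ih (p - r) (by linarith)
      have hpS : p ∉ S := fun h => by linarith [(hS.1 p h).2.1]
      refine ⟨insert p S, hS.insert hr.le (by linarith) hfav, ?_⟩
      rw [Finset.card_insert_of_notMem hpS, Nat.cast_add_one]
      have : (countBelow J (p - r) : ℝ) / κ ≤ countBelow J p / κ := by gcongr
      linarith
    · obtain ⟨u, hu, hlt, hgap⟩ := exists_dense_of_not_isFavorable hκ hfav
      have hlt' : (countBelow J u : ℝ) + 1 ≤ countBelow J p := by exact_mod_cast hlt
      have hdiv : (u - a) / r ≤ (p - a) / r := by gcongr; exact hu.2.le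
      obtain ⟨S, hS, hcard⟩ := ih u (by linarith)
      refine ⟨S, hS.mono_right hu.2.le, ?_⟩
      have : p - u < (countBelow J p : ℝ) / κ - countBelow J u / κ := by
        rw [← sub_div, lt_div_iff₀ hκ]
        linarith
      linarith

theorem exists_isFavorablePacking (hκ : 0 < κ) (hr : 0 < r) (a p : ℝ) :
    ∃ S, IsFavorablePacking J κ r a p S ∧ p - a - r - J.card / κ ≤ r * S.card := by
  obtain ⟨n, hn⟩ := exists_nat_ge ((countBelow J p : ℝ) + (p - a) / r)
  obtain ⟨S, hS, hcard⟩ := exists_isFavorablePacking_of_potential_le hκ hr a n p hn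
  have : (countBelow J p : ℝ) / κ ≤ J.card / κ := by gcongr; exact_mod_cast countBelow_le_card p
  exact ⟨S, hS, by linarith⟩

end FavorableInterval

theorem favorable_intervals_abstract_general
    (t β : ℝ) (ht : 16 ≤ t) (hβ : 0 < β)
    (J : Finset ℝ)
    (hJcard : (J.card : ℝ) ≤ β * t) :
    ∃ S : Finset ℝ,
      Real.sqrt t / 4 - 1 ≤ (S.card : ℝ) ∧
      (∀ s ∈ S, 0 ≤ s - Real.sqrt t ∧ s ≤ t / 2 ∧
        ∀ u ∈ Set.Ico (s - Real.sqrt t) s,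
          ((J.filter (fun x => u ≤ x ∧ x < s)).card : ℝ) ≤ 4 * β * (s - u)) ∧
      (∀ s ∈ S, ∀ s' ∈ S, s ≠ s' →
        Disjoint (Set.Ico (s - Real.sqrt t) s) (Set.Ico (s' - Real.sqrt t) s')) := by
  have hr : 0 < Real.sqrt t := Real.sqrt_pos.2 (by linarith)
  have hrr : Real.sqrt t * Real.sqrt t = t := Real.mul_self_sqrt (by linarith)
  obtain ⟨S, ⟨hfav, hdisj⟩, hcard⟩ :=
    FavorableInterval.exists_isFavorablePacking (J := J) (by positivity : 0 < 4 * β) hr 0 (t / 2)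
  refine ⟨S, ?_, hfav, hdisj⟩
  have : (J.card : ℝ) / (4 * β) ≤ t / 4 := by
    rw [div_le_iff₀ (by positivity)]
    linarith
  refine le_of_mul_le_mul_left ?_ hr
  linarith

/-- Abstract favorable-interval lemma: if `J ⊆ [0,t]` is a finite set of jump times
with `|J| ≤ β t`, then there are at least `√t/4 − 1` pairwise disjoint intervals
`[s − √t, s) ⊆ [0, t/2]` that are favorable, i.e. for all `u ∈ [s − √t, s)`,
`|J ∩ [u, s)| ≤ 4 β (s − u)`. -/
theorem favorable_intervals_abstract
    (t β : ℝ) (ht : 16 ≤ t) (hβ : 0 < β)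
    (J : Finset ℝ)
    (hJsub : (J : Set ℝ) ⊆ Set.Icc 0 t)
    (hJcard : (J.card : ℝ) ≤ β * t) :
    ∃ S : Finset ℝ,
      Real.sqrt t / 4 - 1 ≤ (S.card : ℝ) ∧
      (∀ s ∈ S, 0 ≤ s - Real.sqrt t ∧ s ≤ t / 2 ∧
        ∀ u ∈ Set.Ico (s - Real.sqrt t) s,
          ((J.filter (fun x => u ≤ x ∧ x < s)).card : ℝ) ≤ 4 * β * (s - u)) ∧
      (∀ s ∈ S, ∀ s' ∈ S, s ≠ s' →
        Disjoint (Set.Ico (s - Real.sqrt t) s) (Set.Ico (s' - Real.sqrt t) s')) :=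
  favorable_intervals_abstract_general t β ht hβ J hJcard
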